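/- Let 1 < p < ∞, let R be a k-rectangle in ℝ^k × {pt} ⊂ ℝ^{k+1} which is the bottom face (at height a) of the (k+1)-rectangle R × [a, a+L] with L ≥ 1, and let w be C¹ on R × [a, a+L] in the last variable. Then ∫_R |w(·, a)|ᵖ ≤ ∫_{R×[a,a+L]} (|∂w/∂t|ᵖ + p |w|ᵖ), where t denotes the last coordinate. (This follows by writing ∫_R |w(·,a)|ᵖ = ∫_R ζ|w|ᵖ with ζ(t) = 1 − (t−a)/L, integrating by parts in t, and applying Young's inequality.) -/

import Mathlib

open MeasureTheory intervalIntegral Set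

/-! For fixed `y`, `g = |w(y, ·)|ᵖ` has derivative `p |w|ᵖ⁻² w ∂ₜw`, whose absolute value is at
most `(p - 1) |w|ᵖ + |∂ₜw|ᵖ` by Young's inequality. So `g a ≤ g t + ∫ₐᵃ⁺¹ |g'|` for
`t ∈ [a, a + 1]`; averaging over `t` gives `g a ≤ ∫ₐᵃ⁺¹ (|∂ₜw|ᵖ + p |w|ᵖ)`, and `L ≥ 1` lets the
interval grow to `[a, a + L]`. Integrating over `R` finishes, the right-hand side being integrable
by Fubini. -/

theorem abs_deriv_abs_rpow {p : ℝ} (hp : 1 < p) (x : ℝ) :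
    |p * |x| ^ (p - 2) * x| = p * |x| ^ (p - 1) := by
  rw [abs_mul, abs_mul, abs_of_pos (by linarith : 0 < p),
    abs_of_nonneg (Real.rpow_nonneg (abs_nonneg x) _), mul_assoc,
    ← Real.rpow_add_one' (abs_nonneg x) (by linarith)]
  ring_nf

theorem mul_rpow_sub_one_mul_le {p a b : ℝ} (hp : 1 < p) (ha : 0 ≤ a) (hb : 0 ≤ b) :
    p * (a ^ (p - 1) * b) ≤ (p - 1) * a ^ p + b ^ p := by
  have young := Real.young_inequality_of_nonneg (Real.rpow_nonneg ha (p - 1)) hb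
    (Real.HolderConjugate.conjExponent hp).symm
  rw [Real.conjExponent, ← Real.rpow_mul ha,
    show (p - 1) * (p / (p - 1)) = p by field_simp [(sub_pos.2 hp).ne']] at young
  have hp0 : 0 < p := by linarith
  calc p * (a ^ (p - 1) * b) ≤ p * (a ^ p / (p / (p - 1)) + b ^ p / p) := by gcongr
    _ = (p - 1) * a ^ p + b ^ p := by field_simp

theorem sub_le_integral_abs_deriv {g g' : ℝ → ℝ} {a b t : ℝ} (ht : t ∈ Icc a b)
    (hg : ContinuousOn g (Icc a b)) (hderiv : ∀ x ∈ Ioo a b, HasDerivAt g (g' x) x)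
    (hint : IntervalIntegrable g' volume a b) :
    g a - g t ≤ ∫ x in a..b, |g' x| := by
  have hsub : Icc a t ⊆ Icc a b := Icc_subset_Icc_right ht.2
  have hint_t : IntervalIntegrable g' volume a t :=
    hint.mono_set (by rwa [uIcc_of_le ht.1, uIcc_of_le (ht.1.trans ht.2)])
  have ftc : ∫ x in a..t, g' x = g t - g a :=
    integral_eq_sub_of_hasDerivAt_of_le ht.1 (hg.mono hsub)
      (fun x hx => hderiv x (Ioo_subset_Ioo_right ht.2 hx)) hint_t
  calc g a - g t = -∫ x in a..t, g' x := by rw [ftc]; ring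
    _ ≤ ∫ x in a..t, |g' x| := (neg_le_abs _).trans (abs_integral_le_integral_abs ht.1)
    _ ≤ ∫ x in a..b, |g' x| :=
      integral_mono_interval le_rfl ht.1 ht.2 (.of_forall fun _ => abs_nonneg _) hint.abs

theorem mul_le_integral_add_mul_integral_abs_deriv {g g' : ℝ → ℝ} {a b : ℝ} (hab : a ≤ b)
    (hg : ContinuousOn g (Icc a b)) (hderiv : ∀ x ∈ Ioo a b, HasDerivAt g (g' x) x)
    (hint : IntervalIntegrable g' volume a b) :
    (b - a) * g a ≤ (∫ t in a..b, g t) + (b - a) * ∫ x in a..b, |g' x| := by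
  have hg_int : IntervalIntegrable g volume a b := hg.intervalIntegrable_of_Icc hab
  have averaged :=
    integral_mono_on hab intervalIntegrable_const (hg_int.add intervalIntegrable_const)
      fun t ht => (by linarith [sub_le_integral_abs_deriv ht hg hderiv hint] :
        g a ≤ g t + ∫ x in a..b, |g' x|)
  rwa [integral_add hg_int intervalIntegrable_const, intervalIntegral.integral_const,
    intervalIntegral.integral_const, smul_eq_mul, smul_eq_mul] at averaged

theorem continuous_deriv_abs_rpow {p : ℝ} (hp : 1 < p) :
    Continuous fun x : ℝ => p * |x| ^ (p - 2) * x := by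
  have hderiv : deriv (fun x : ℝ => |x| ^ p) = fun x => p * |x| ^ (p - 2) * x :=
    funext fun x => (hasDerivAt_abs_rpow x hp).deriv
  simpa only [Real.norm_eq_abs, hderiv] using
    (contDiff_norm_rpow (E := ℝ) hp).continuous_deriv le_rfl

theorem abs_rpow_le_integral_of_hasDerivWithinAt {p a L : ℝ} {f f' : ℝ → ℝ} (hp : 1 < p)
    (hL : 1 ≤ L) (hf' : ContinuousOn f' (Icc a (a + L)))
    (hderiv : ∀ t ∈ Icc a (a + L), HasDerivWithinAt f (f' t) (Icc a (a + L)) t) :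
    |f a| ^ p ≤ ∫ t in a..(a + L), (|f' t| ^ p + p * |f t| ^ p) := by
  have hp0 : 0 ≤ p := by linarith
  have hsub : Icc a (a + 1) ⊆ Icc a (a + L) := Icc_subset_Icc_right (by linarith)
  have hf : ContinuousOn f (Icc a (a + L)) := fun t ht => (hderiv t ht).continuousWithinAt
  have hfp : ContinuousOn (fun t => |f t| ^ p) (Icc a (a + L)) :=
    hf.abs.rpow_const fun _ _ => .inr hp0
  have hf'p : ContinuousOn (fun t => |f' t| ^ p) (Icc a (a + L)) :=
    hf'.abs.rpow_const fun _ _ => .inr hp0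
  set g' := fun t => p * |f t| ^ (p - 2) * f t * f' t
  have hg' : ContinuousOn g' (Icc a (a + L)) :=
    ((continuous_deriv_abs_rpow hp).comp_continuousOn hf).mul hf'
  have hg'_le : ∀ t, |g' t| ≤ (p - 1) * |f t| ^ p + |f' t| ^ p := fun t => by
    rw [abs_mul, abs_deriv_abs_rpow hp, mul_assoc]
    exact mul_rpow_sub_one_mul_le hp (abs_nonneg _) (abs_nonneg _)
  have hg_deriv : ∀ t ∈ Ioo a (a + 1), HasDerivAt (fun t => |f t| ^ p) (g' t) t := fun t ht =>
    (hasDerivAt_abs_rpow (f t) hp).comp t <|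
      (hderiv t (hsub (Ioo_subset_Icc_self ht))).hasDerivAt
        (Icc_mem_nhds ht.1 (ht.2.trans_le (by linarith)))
  have on_unit : ∀ {h : ℝ → ℝ}, ContinuousOn h (Icc a (a + L)) →
      IntervalIntegrable h volume a (a + 1) := fun h =>
    (h.mono hsub).intervalIntegrable_of_Icc (by linarith)
  have hbound : ContinuousOn (fun t => (p - 1) * |f t| ^ p + |f' t| ^ p) (Icc a (a + L)) :=
    (continuousOn_const.mul hfp).add hf'p
  have average := mul_le_integral_add_mul_integral_abs_deriv (by linarith) (hfp.mono hsub)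
    hg_deriv (on_unit hg')
  rw [add_sub_cancel_left, one_mul, one_mul] at average
  calc |f a| ^ p
      ≤ (∫ t in a..(a + 1), |f t| ^ p) + ∫ t in a..(a + 1), |g' t| := average
    _ ≤ (∫ t in a..(a + 1), |f t| ^ p) + ∫ t in a..(a + 1), ((p - 1) * |f t| ^ p + |f' t| ^ p) :=
        add_le_add_right
          (integral_mono_on (by linarith) (on_unit hg'.abs) (on_unit hbound) fun t _ => hg'_le t) _
    _ = ∫ t in a..(a + 1), (|f' t| ^ p + p * |f t| ^ p) := by
        rw [← integral_add (on_unit hfp) (on_unit hbound)]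
        exact integral_congr fun t _ => by ring
    _ ≤ ∫ t in a..(a + L), (|f' t| ^ p + p * |f t| ^ p) :=
        integral_mono_interval le_rfl (by linarith) (by linarith)
          (.of_forall fun t => by positivity)
          ((hf'p.add (continuousOn_const.mul hfp)).intervalIntegrable_of_Icc (by linarith))

theorem IsCompact.integrableOn_intervalIntegral {X : Type*} [TopologicalSpace X] [T2Space X]
    [MeasurableSpace X] [OpensMeasurableSpace X] {μ : Measure X} [IsFiniteMeasureOnCompacts μ]
    [SFinite μ] {K : Set X} (hK : IsCompact K) {F : X → ℝ → ℝ} {a b : ℝ} (hab : a ≤ b)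
    (hF : ContinuousOn (Function.uncurry F) (K ×ˢ Icc a b)) :
    IntegrableOn (fun y => ∫ t in a..b, F y t) K μ := by
  have hF_int : IntegrableOn (Function.uncurry F) (K ×ˢ Ioc a b) (μ.prod volume) :=
    (hF.integrableOn_compact (hK.prod isCompact_Icc)).mono_set
      (prod_mono le_rfl Ioc_subset_Icc_self)
  rw [IntegrableOn, ← Measure.prod_restrict] at hF_int
  simp_rw [integral_of_le hab]
  exact hF_int.integral_prod_left

theorem trace_step_estimate_general
    (k : ℕ) (p : ℝ) (hp : 1 < p)
    (c d : Fin k → ℝ)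
    (a L : ℝ) (hL : 1 ≤ L)
    (w wt : (Fin k → ℝ) → ℝ → ℝ)
    (hwt : ∀ y ∈ Set.univ.pi (fun i => Set.Icc (c i) (d i)),
      ∀ t ∈ Set.Icc a (a + L), HasDerivWithinAt (w y) (wt y t) (Set.Icc a (a + L)) t)
    (hwc : ContinuousOn (fun q : (Fin k → ℝ) × ℝ => w q.1 q.2)
      ((Set.univ.pi fun i => Set.Icc (c i) (d i)) ×ˢ Set.Icc a (a + L)))
    (hwtc : ContinuousOn (fun q : (Fin k → ℝ) × ℝ => wt q.1 q.2)
      ((Set.univ.pi fun i => Set.Icc (c i) (d i)) ×ˢ Set.Icc a (a + L))) :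
    (∫ y in Set.univ.pi (fun i => Set.Icc (c i) (d i)), |w y a| ^ p) ≤
      ∫ y in Set.univ.pi (fun i => Set.Icc (c i) (d i)),
        (∫ t in a..(a + L), (|wt y t| ^ p + p * |w y t| ^ p)) := by
  set R := Set.univ.pi fun i => Set.Icc (c i) (d i)
  have hR : IsCompact R := isCompact_univ_pi fun _ => isCompact_Icc
  have hp0 : 0 ≤ p := by linarith
  have hw_bottom : ContinuousOn (fun y => w y a) R :=
    hwc.uncurry_right (f := w) a (left_mem_Icc.2 (by linarith))
  have hintegrand : ContinuousOn
      (fun q : (Fin k → ℝ) × ℝ => |wt q.1 q.2| ^ p + p * |w q.1 q.2| ^ p) (R ×ˢ Icc a (a + L)) :=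
    (hwtc.abs.rpow_const fun _ _ => .inr hp0).add
      (continuousOn_const.mul (hwc.abs.rpow_const fun _ _ => .inr hp0))
  refine setIntegral_mono_on
    ((hw_bottom.abs.rpow_const fun _ _ => .inr hp0).integrableOn_compact hR)
    (hR.integrableOn_intervalIntegral (by linarith) hintegrand) hR.measurableSet fun y hy => ?_
  exact abs_rpow_le_integral_of_hasDerivWithinAt hp hL (hwtc.uncurry_left (f := wt) y hy)
    (hwt y hy)

/-- **One-step trace estimate on a rectangle.** Let `1 < p < ∞`, let
`R = Π_i [c_i, d_i]` be a closed axis-parallel `k`-rectangle, `a ∈ ℝ`, `L ≥ 1`, and let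
`w : R × [a, a+L] → ℝ` be continuous and continuously differentiable in the last
variable `t`, with `∂w/∂t = wt`. Then
`∫_R |w(·,a)|ᵖ ≤ ∫_{R×[a,a+L]} (|∂w/∂t|ᵖ + p |w|ᵖ)`. -/
theorem trace_step_estimate
    (k : ℕ) (p : ℝ) (hp : 1 < p)
    (c d : Fin k → ℝ) (hcd : ∀ i, c i ≤ d i)
    (a L : ℝ) (hL : 1 ≤ L)
    (w wt : (Fin k → ℝ) → ℝ → ℝ)
    (hwt : ∀ y ∈ Set.univ.pi (fun i => Set.Icc (c i) (d i)),
      ∀ t ∈ Set.Icc a (a + L), HasDerivWithinAt (w y) (wt y t) (Set.Icc a (a + L)) t)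
    (hwc : ContinuousOn (fun q : (Fin k → ℝ) × ℝ => w q.1 q.2)
      ((Set.univ.pi fun i => Set.Icc (c i) (d i)) ×ˢ Set.Icc a (a + L)))
    (hwtc : ContinuousOn (fun q : (Fin k → ℝ) × ℝ => wt q.1 q.2)
      ((Set.univ.pi fun i => Set.Icc (c i) (d i)) ×ˢ Set.Icc a (a + L))) :
    (∫ y in Set.univ.pi (fun i => Set.Icc (c i) (d i)), |w y a| ^ p) ≤
      ∫ y in Set.univ.pi (fun i => Set.Icc (c i) (d i)),
        (∫ t in a..(a + L), (|wt y t| ^ p + p * |w y t| ^ p)) :=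
  trace_step_estimate_general k p hp c d a L hL w wt hwt hwc hwtc
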